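/- arXiv:2303.06300 — 2 statements merged into one kernel-verified Lean document; each statement's English description precedes it below -/
import Mathlib

section
/- For all n ≥ 0 and k ≥ 0, the number of non-crossing partitions of [n] with exactly k occurrences of the subword 112 equals the number with exactly k occurrences of the subword 122. -/
/-- `l` is a restricted growth sequence (canonical sequential form of a set
partition): it starts with 1, all letters are ≥ 1, and each letter is at most
one more than the maximum of the preceding prefix. -/
def IsRGS (l : List ℕ) : Prop :=
  l.getD 0 1 = 1 ∧ (∀ x ∈ l, 1 ≤ x) ∧
  ∀ i, i + 1 < l.length → l.getD (i + 1) 0 ≤ (l.take (i + 1)).foldr max 0 + 1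

/-- `l` contains a (classical) occurrence of 1-2-1-2: a subsequence a,b,a,b with a < b. -/
def Crossing (l : List ℕ) : Prop :=
  ∃ i j k m : ℕ, i < j ∧ j < k ∧ k < m ∧ m < l.length ∧
    l.getD i 0 = l.getD k 0 ∧ l.getD j 0 = l.getD m 0 ∧ l.getD i 0 < l.getD j 0

/-- `l` is the canonical sequential form of a non-crossing partition of [n]. -/
def NCseq (n : ℕ) (l : List ℕ) : Prop := l.length = n ∧ IsRGS l ∧ ¬ Crossing l

/-- Two lists of the same length are order-isomorphic. -/
def OrdIso (s t : List ℕ) : Prop :=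
  s.length = t.length ∧ ∀ j k, j < s.length → k < s.length →
    (s.getD j 0 < s.getD k 0 ↔ t.getD j 0 < t.getD k 0)

/-- The subword pattern `τ` occurs in `l` starting at position `i`. -/
def occAt (τ l : List ℕ) (i : ℕ) : Prop := OrdIso τ ((l.drop i).take τ.length)

/-- The number of occurrences of the subword pattern `τ` in `l`. -/
noncomputable def occCount (τ l : List ℕ) : ℕ := Nat.card {i : ℕ // occAt τ l i}

/-- The total number of occurrences of the subword pattern `τ` over all
members of NC_n, counted with multiplicity (as marked occurrences). -/
noncomputable def totalOcc (n : ℕ) (τ : List ℕ) : ℕ :=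
  Nat.card {p : List ℕ × ℕ // NCseq n p.1 ∧ occAt τ p.1 p.2}

/-!
Write a word as its sequence of runs `v₁^r₁ v₂^r₂ ⋯ v_m^r_m` (adjacent values distinct,
multiplicities positive). An occurrence of `112` is an ascent `vⱼ < vⱼ₊₁` with `rⱼ ≥ 2`, an
occurrence of `122` one with `rⱼ₊₁ ≥ 2`. Cut the runs into maximal chains of strictly increasing
values: no ascent joins two chains, and reversing the multiplicities inside every chain exchanges
the two statistics. This map keeps the chains, so it is an involution; it keeps the length and the
sequence of run values, and being a restricted growth sequence or containing a crossing `abab`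
depend only on that sequence, so it maps `NC_n` onto itself.
-/

namespace NCPattern

open List

section RunLength

variable {α : Type*}

def runDecode (rs : List (α × ℕ)) : List α := rs.flatMap fun p => replicate p.2 p.1

def IsRunEncoding (rs : List (α × ℕ)) : Prop :=
  (∀ p ∈ rs, p.2 ≠ 0) ∧ (rs.map Prod.fst).IsChain (· ≠ ·)

@[simp] lemma runDecode_nil : runDecode ([] : List (α × ℕ)) = [] := rfl

@[simp] lemma runDecode_cons (p : α × ℕ) (rs : List (α × ℕ)) :
    runDecode (p :: rs) = replicate p.2 p.1 ++ runDecode rs := rfl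

lemma length_runDecode (rs : List (α × ℕ)) : (runDecode rs).length = (rs.map Prod.snd).sum := by
  induction rs <;> simp [*]

lemma IsRunEncoding.tail {p : α × ℕ} {rs : List (α × ℕ)} (h : IsRunEncoding (p :: rs)) :
    IsRunEncoding rs :=
  ⟨fun q hq => h.1 q (mem_cons_of_mem p hq), h.2.tail⟩

variable [DecidableEq α] [Inhabited α]

def runEncode (l : List α) : List (α × ℕ) :=
  (l.splitBy (· == ·)).map fun r => (r.headD default, r.length)

lemma eq_replicate_of_mem_splitBy {l r : List α} (hr : r ∈ l.splitBy (· == ·)) :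
    r = replicate r.length (r.headD default) := by
  obtain ⟨a, r, rfl⟩ := exists_cons_of_ne_nil (ne_nil_of_mem_splitBy hr)
  have := isChain_of_mem_splitBy hr
  simp only [beq_iff_eq] at this
  simpa [replicate_succ] using isChain_cons_eq_iff_eq_replicate.1 this

lemma runDecode_runEncode (l : List α) : runDecode (runEncode l) = l := by
  conv_rhs => rw [← flatten_splitBy (fun a b : α => a == b) l]
  simp only [runDecode, runEncode, flatMap_def, map_map]
  congr 1
  conv_rhs => rw [← map_id (l.splitBy _)]
  refine map_congr_left fun r hr => ?_
  exact (eq_replicate_of_mem_splitBy hr).symm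

lemma isRunEncoding_runEncode (l : List α) : IsRunEncoding (runEncode l) := by
  refine ⟨?_, ?_⟩
  · simp only [runEncode, mem_map]
    rintro _ ⟨r, hr, rfl⟩
    simpa using ne_nil_of_mem_splitBy hr
  · simp only [runEncode, map_map, isChain_map]
    refine (isChain_getLast_head_splitBy _ l).imp_of_mem_imp fun r r' hr hr' ⟨hne, hne', h⟩ => ?_
    have hlast : r.getLast hne = r.headD default :=
      (eq_replicate_iff.1 (eq_replicate_of_mem_splitBy hr)).2 _ (getLast_mem hne)
    obtain ⟨b, r', rfl⟩ := exists_cons_of_ne_nil hne'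
    simpa [hlast] using h

lemma runEncode_runDecode {rs : List (α × ℕ)} (h : IsRunEncoding rs) :
    runEncode (runDecode rs) = rs := by
  have hsplit : (runDecode rs).splitBy (· == ·) = rs.map fun p => replicate p.2 p.1 := by
    refine splitBy_flatten ?_ ?_ ?_
    · simp only [mem_map, replicate_eq_nil_iff, not_exists, not_and]
      exact fun p hp => h.1 p hp
    · simp only [mem_map]
      rintro _ ⟨p, -, rfl⟩
      exact isChain_replicate_of_rel _ (beq_self_eq_true _)
    · have hfst := h.2
      rw [isChain_map] at hfst ⊢
      refine hfst.imp_of_mem_imp fun p q hp hq hpq => ⟨?_, ?_, ?_⟩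
      · simpa using h.1 p hp
      · simpa using h.1 q hq
      · simpa using hpq
  simp only [runEncode, hsplit, map_map]
  conv_rhs => rw [← map_id rs]
  refine map_congr_left fun p hp => ?_
  obtain ⟨a, n⟩ := p
  obtain ⟨n, rfl⟩ := Nat.exists_eq_succ_of_ne_zero (h.1 _ hp)
  simp [replicate_succ]

end RunLength

section Counting

variable {α : Type*}

def pairCount (Q : α → α → Prop) [DecidableRel Q] : List α → ℕ
  | a :: b :: l => (if Q a b then 1 else 0) + pairCount Q (b :: l)
  | _ => 0

def tripleCount (P : α → α → α → Prop) [∀ a b c, Decidable (P a b c)] : List α → ℕ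
  | a :: b :: c :: l => (if P a b c then 1 else 0) + tripleCount P (b :: c :: l)
  | _ => 0

variable (Q : α → α → Prop) [DecidableRel Q]

lemma pairCount_append {l₁ l₂ : List α} (h : ∀ a ∈ l₁.getLast?, ∀ b ∈ l₂.head?, ¬ Q a b) :
    pairCount Q (l₁ ++ l₂) = pairCount Q l₁ + pairCount Q l₂ := by
  induction l₁ with
  | nil => simp [pairCount]
  | cons a l₁ ih =>
    rcases l₁ with _ | ⟨b, l₁⟩
    · rcases l₂ with _ | ⟨b, l₂⟩
      · rfl
      · simp [pairCount, h a rfl b rfl]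
    · simp only [cons_append, pairCount] at ih ⊢
      rw [ih (by simpa [getLast?_cons_cons] using h)]
      omega

lemma pairCount_flatten {L : List (List α)} (hL : [] ∉ L)
    (h : L.IsChain fun c d => ∀ a ∈ c.getLast?, ∀ b ∈ d.head?, ¬ Q a b) :
    pairCount Q L.flatten = (L.map (pairCount Q)).sum := by
  induction L with
  | nil => rfl
  | cons c L ih =>
    rw [flatten_cons, map_cons, sum_cons, ← ih (by simp_all) h.tail]
    refine pairCount_append Q fun a ha b hb => ?_
    rcases L with _ | ⟨d, L⟩
    · simp at hb
    · have hd : d ≠ [] := fun hd => hL (by simp [hd])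
      rw [flatten_cons, head?_append, head?_eq_some_head hd, Option.some_or] at hb
      exact (isChain_cons_cons.1 h).1 a ha b (by simpa [head?_eq_some_head hd] using hb)

lemma pairCount_eq_sum_splitBy (r : α → α → Bool) (hQ : ∀ a b, Q a b → r a b) (l : List α) :
    pairCount Q l = ((l.splitBy r).map (pairCount Q)).sum := by
  conv_lhs => rw [← flatten_splitBy r l]
  refine pairCount_flatten Q (nil_notMem_splitBy r l) ((isChain_getLast_head_splitBy r l).imp ?_)
  rintro c d ⟨hc, hd, h⟩ a ha b hb hab
  rw [getLast?_eq_some_getLast hc, Option.mem_some_iff] at ha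
  rw [head?_eq_some_head hd, Option.mem_some_iff] at hb
  subst ha hb
  simp [hQ _ _ hab] at h

lemma pairCount_eq_countP_dropLast (f : α → Bool) {l : List α}
    (h : l.IsChain fun a b => (Q a b ↔ f a)) : pairCount Q l = l.dropLast.countP f := by
  induction l with
  | nil => rfl
  | cons a l ih =>
    rcases l with _ | ⟨b, l⟩
    · rfl
    · rw [pairCount, ih h.tail, dropLast_cons_cons, countP_cons,
        if_congr (isChain_cons_cons.1 h).1 rfl rfl]
      omega

lemma pairCount_eq_countP_tail (g : α → Bool) {l : List α}
    (h : l.IsChain fun a b => (Q a b ↔ g b)) : pairCount Q l = l.tail.countP g := by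
  induction l with
  | nil => rfl
  | cons a l ih =>
    rcases l with _ | ⟨b, l⟩
    · rfl
    · rw [pairCount, ih h.tail, tail_cons, tail_cons, countP_cons,
        if_congr (isChain_cons_cons.1 h).1 rfl rfl]
      omega

end Counting

section AscendingChains

variable {α : Type*}

def reverseLengths (c : List (α × ℕ)) : List (α × ℕ) :=
  (c.map Prod.fst).zip (c.map Prod.snd).reverse

@[simp] lemma map_fst_reverseLengths (c : List (α × ℕ)) :
    (reverseLengths c).map Prod.fst = c.map Prod.fst :=
  map_fst_zip (by simp)

@[simp] lemma map_snd_reverseLengths (c : List (α × ℕ)) :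
    (reverseLengths c).map Prod.snd = (c.map Prod.snd).reverse :=
  map_snd_zip (by simp)

lemma reverseLengths_reverseLengths (c : List (α × ℕ)) : reverseLengths (reverseLengths c) = c := by
  conv_lhs => rw [reverseLengths, map_fst_reverseLengths, map_snd_reverseLengths, reverse_reverse]
  simpa using zip_unzip c

lemma fst_getLast_eq_of_map_fst_eq {c c' : List (α × ℕ)} (h : c.map Prod.fst = c'.map Prod.fst)
    (hc : c ≠ []) (hc' : c' ≠ []) : (c.getLast hc).1 = (c'.getLast hc').1 := by
  rw [← getLast_map (f := Prod.fst), ← getLast_map (f := Prod.fst)]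
  · simp only [h]
  all_goals simpa

lemma fst_head_eq_of_map_fst_eq {c c' : List (α × ℕ)} (h : c.map Prod.fst = c'.map Prod.fst)
    (hc : c ≠ []) (hc' : c' ≠ []) : (c.head hc).1 = (c'.head hc').1 := by
  rw [← head_map (f := Prod.fst), ← head_map (f := Prod.fst)]
  · simp only [h]
  all_goals simpa

variable [LinearOrder α]

def ascChains (rs : List (α × ℕ)) : List (List (α × ℕ)) := rs.splitBy fun p q => p.1 < q.1

def reverseChainLengths (rs : List (α × ℕ)) : List (α × ℕ) := (ascChains rs).flatMap reverseLengths

lemma ascChains_reverseChainLengths (rs : List (α × ℕ)) :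
    ascChains (reverseChainLengths rs) = (ascChains rs).map reverseLengths := by
  have hne : ∀ c : List (α × ℕ), reverseLengths c = [] → c = [] := fun c hc => by
    simpa using congrArg (map Prod.fst) hc
  refine splitBy_flatten ?_ ?_ ?_
  · simp only [mem_map, not_exists, not_and]
    exact fun c hc h => nil_notMem_splitBy _ rs (hne c h ▸ hc)
  · simp only [mem_map]
    rintro _ ⟨c, hc, rfl⟩
    have := isChain_of_mem_splitBy hc
    rw [← isChain_map (R := fun a b => decide (a < b)) Prod.fst] at this ⊢
    rwa [map_fst_reverseLengths]
  · rw [isChain_map]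
    refine (isChain_getLast_head_splitBy _ rs).imp fun c d ⟨hc, hd, h⟩ => ?_
    refine ⟨fun h' => hc (hne c h'), fun h' => hd (hne d h'), ?_⟩
    rwa [fst_getLast_eq_of_map_fst_eq (map_fst_reverseLengths c) _ hc,
      fst_head_eq_of_map_fst_eq (map_fst_reverseLengths d) _ hd]

lemma reverseChainLengths_involutive : Function.Involutive (reverseChainLengths (α := α)) := by
  intro rs
  rw [reverseChainLengths, ascChains_reverseChainLengths, flatMap_map]
  simp only [reverseLengths_reverseLengths, flatMap_id']
  exact flatten_splitBy _ rs

lemma map_fst_reverseChainLengths (rs : List (α × ℕ)) :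
    (reverseChainLengths rs).map Prod.fst = rs.map Prod.fst := by
  simp only [reverseChainLengths, flatMap_def, map_flatten, map_map, Function.comp_def,
    map_fst_reverseLengths]
  rw [← map_flatten, ascChains, flatten_splitBy]

lemma map_snd_reverseChainLengths_perm (rs : List (α × ℕ)) :
    (reverseChainLengths rs).map Prod.snd ~ rs.map Prod.snd := by
  conv_rhs => rw [← flatten_splitBy (fun p q : α × ℕ => decide (p.1 < q.1)) rs]
  simp only [reverseChainLengths, ascChains, map_flatMap, map_snd_reverseLengths, map_flatten,
    ← flatMap_def]
  exact Perm.flatMap_left _ fun c _ => reverse_perm _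

lemma IsRunEncoding.reverseChainLengths {rs : List (α × ℕ)} (h : IsRunEncoding rs) :
    IsRunEncoding (reverseChainLengths rs) := by
  refine ⟨fun p hp => ?_, by rw [map_fst_reverseChainLengths]; exact h.2⟩
  obtain ⟨q, hq, hpq⟩ :=
    mem_map.1 ((map_snd_reverseChainLengths_perm rs).subset (mem_map_of_mem hp))
  exact hpq ▸ h.1 q hq

lemma pairCount_reverseLengths {c : List (α × ℕ)} (hc : c.IsChain fun p q => p.1 < q.1) :
    pairCount (fun p q : α × ℕ => p.1 < q.1 ∧ 2 ≤ q.2) (reverseLengths c) =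
      pairCount (fun p q : α × ℕ => 2 ≤ p.2 ∧ p.1 < q.1) c := by
  have hc' : (reverseLengths c).IsChain fun p q => p.1 < q.1 := by
    rw [← isChain_map (R := (· < ·)) Prod.fst] at hc ⊢
    rwa [map_fst_reverseLengths]
  rw [pairCount_eq_countP_tail _ (fun p => decide (2 ≤ p.2)) (hc'.imp fun p q h => by simp [h]),
    pairCount_eq_countP_dropLast _ (fun p => decide (2 ≤ p.2)) (hc.imp fun p q h => by simp [h])]
  calc (reverseLengths c).tail.countP (fun p => decide (2 ≤ p.2))
      = ((reverseLengths c).map Prod.snd).tail.countP (fun m => decide (2 ≤ m)) := by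
        rw [← map_tail, countP_map]; rfl
    _ = (c.map Prod.snd).dropLast.reverse.countP (fun m => decide (2 ≤ m)) := by
        rw [map_snd_reverseLengths, tail_reverse]
    _ = c.dropLast.countP (fun p => decide (2 ≤ p.2)) := by
        rw [countP_reverse, ← map_dropLast, countP_map]; rfl

lemma pairCount_reverseChainLengths (rs : List (α × ℕ)) :
    pairCount (fun p q : α × ℕ => p.1 < q.1 ∧ 2 ≤ q.2) (reverseChainLengths rs) =
      pairCount (fun p q : α × ℕ => 2 ≤ p.2 ∧ p.1 < q.1) rs := by
  rw [pairCount_eq_sum_splitBy _ (fun p q => decide (p.1 < q.1)) (by simp +contextual),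
    pairCount_eq_sum_splitBy _ (fun p q => decide (p.1 < q.1)) (by simp +contextual) rs]
  change ((ascChains _).map _).sum = ((ascChains rs).map _).sum
  rw [ascChains_reverseChainLengths, map_map]
  congr 1
  refine map_congr_left fun c hc => pairCount_reverseLengths ?_
  simpa using isChain_of_mem_splitBy hc

end AscendingChains

section Subwords

variable {α : Type*}

lemma head?_runDecode {rs : List (α × ℕ)} (h : ∀ p ∈ rs, p.2 ≠ 0) :
    (runDecode rs).head? = rs.head?.map Prod.fst := by
  rcases rs with _ | ⟨⟨a, n⟩, rs⟩
  · rfl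
  · obtain ⟨n, rfl⟩ := Nat.exists_eq_succ_of_ne_zero (h _ mem_cons_self)
    simp [replicate_succ]

lemma tripleCount_cons_cons_of_not {P : α → α → α → Prop} [∀ a b c, Decidable (P a b c)]
    {a b : α} {l : List α} (h : ∀ c ∈ l.head?, ¬ P a b c) :
    tripleCount P (a :: b :: l) = tripleCount P (b :: l) := by
  rcases l with _ | ⟨c, l⟩
  · rfl
  · simp [tripleCount, h c rfl]

variable [LinearOrder α]

lemma tripleCount_112_replicate_append (v : α) (r : ℕ) (l : List α) :
    tripleCount (fun a b c : α => a = b ∧ b < c) (replicate (r + 2) v ++ l) =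
      tripleCount (fun a b c : α => a = b ∧ b < c) (v :: v :: l) := by
  induction r with
  | zero => rfl
  | succ r ih =>
    rw [← ih]
    simp only [replicate_succ, cons_append]
    exact tripleCount_cons_cons_of_not (by simp)

lemma tripleCount_112_run {v w : α} (hvw : v ≠ w) {r : ℕ} (hr : r ≠ 0) (u : List α) :
    tripleCount (fun a b c : α => a = b ∧ b < c) (replicate r v ++ w :: u) =
      (if 2 ≤ r ∧ v < w then 1 else 0) + tripleCount (fun a b c : α => a = b ∧ b < c) (w :: u) := by
  have hvw' : tripleCount (fun a b c : α => a = b ∧ b < c) (v :: w :: u) =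
      tripleCount (fun a b c : α => a = b ∧ b < c) (w :: u) :=
    tripleCount_cons_cons_of_not (by simp [hvw])
  match r, hr with
  | 1, _ => simpa using hvw'
  | r + 2, _ =>
    rw [tripleCount_112_replicate_append, tripleCount, hvw']
    simp

lemma tripleCount_runDecode_112 {rs : List (α × ℕ)} (h : IsRunEncoding rs) :
    tripleCount (fun a b c : α => a = b ∧ b < c) (runDecode rs) =
      pairCount (fun p q : α × ℕ => 2 ≤ p.2 ∧ p.1 < q.1) rs := by
  induction rs with
  | nil => rfl
  | cons p rs ih =>
    obtain ⟨v, r⟩ := p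
    rcases rs with _ | ⟨⟨w, s⟩, rs⟩
    · match r with
      | 0 | 1 => rfl
      | r + 2 => rw [runDecode_cons, tripleCount_112_replicate_append]; rfl
    · obtain ⟨s, rfl⟩ := Nat.exists_eq_succ_of_ne_zero (h.1 (w, s) (by simp))
      have hvw : v ≠ w := (isChain_cons_cons.1 h.2).1
      have hd : runDecode ((w, s + 1) :: rs) = w :: (replicate s w ++ runDecode rs) := by
        simp [replicate_succ]
      rw [runDecode_cons, hd, tripleCount_112_run hvw (h.1 (v, r) (by simp)), ← hd, ih h.tail]
      rfl

lemma tripleCount_122_replicate_append (v : α) (r : ℕ) (l : List α) :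
    tripleCount (fun a b c : α => a < b ∧ b = c) (replicate (r + 1) v ++ l) =
      tripleCount (fun a b c : α => a < b ∧ b = c) (v :: l) := by
  induction r with
  | zero => rfl
  | succ r ih =>
    rw [← ih]
    simp only [replicate_succ, cons_append]
    exact tripleCount_cons_cons_of_not (by simp)

lemma tripleCount_122_run {v w : α} {s : ℕ} (hs : s ≠ 0) {u : List α}
    (hu : ∀ x ∈ u.head?, x ≠ w) :
    tripleCount (fun a b c : α => a < b ∧ b = c) (v :: (replicate s w ++ u)) =
      (if v < w ∧ 2 ≤ s then 1 else 0) +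
        tripleCount (fun a b c : α => a < b ∧ b = c) (replicate s w ++ u) := by
  match s, hs with
  | 1, _ =>
    simpa using tripleCount_cons_cons_of_not fun x hx h => hu x hx h.2.symm
  | s + 2, _ =>
    simp [replicate_succ, tripleCount]

lemma tripleCount_runDecode_122 {rs : List (α × ℕ)} (h : IsRunEncoding rs) :
    tripleCount (fun a b c : α => a < b ∧ b = c) (runDecode rs) =
      pairCount (fun p q : α × ℕ => p.1 < q.1 ∧ 2 ≤ q.2) rs := by
  induction rs with
  | nil => rfl
  | cons p rs ih =>
    obtain ⟨v, r⟩ := p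
    obtain ⟨r, rfl⟩ := Nat.exists_eq_succ_of_ne_zero (h.1 (v, r) (by simp))
    rw [runDecode_cons, tripleCount_122_replicate_append]
    rcases rs with _ | ⟨⟨w, s⟩, rs⟩
    · rfl
    · have hu : ∀ x ∈ (runDecode rs).head?, x ≠ w := by
        rw [head?_runDecode fun p hp => h.1 p (by simp [hp])]
        rcases rs with _ | ⟨⟨x, m⟩, rs⟩
        · simp
        · simpa [eq_comm] using (isChain_cons_cons.1 (isChain_cons_cons.1 h.2).2).1
      rw [runDecode_cons, tripleCount_122_run (h.1 (w, s) (by simp)) hu, ← runDecode_cons,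
        ih h.tail]
      rfl

end Subwords

section Occurrences

lemma add_length_le_of_occAt {τ l : List ℕ} (hτ : τ ≠ []) {i : ℕ} (h : occAt τ l i) :
    i + τ.length ≤ l.length := by
  have := h.1
  have := length_pos_iff.2 hτ
  simp only [length_take, length_drop] at *
  omega

open Classical in
lemma occCount_eq_sum {τ : List ℕ} (hτ : τ ≠ []) (l : List ℕ) :
    occCount τ l = ∑ i ∈ Finset.range l.length, if occAt τ l i then 1 else 0 := by
  rw [← Finset.card_filter, occCount, ← Nat.card_eq_finsetCard]
  refine Nat.card_congr (Equiv.subtypeEquivRight fun i => ?_)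
  have := length_pos_iff.2 hτ
  simp only [Finset.mem_filter, Finset.mem_range, iff_and_self]
  intro h
  have := add_length_le_of_occAt hτ h
  omega

open Classical in
lemma occCount_cons {τ : List ℕ} (hτ : τ ≠ []) (a : ℕ) (l : List ℕ) :
    occCount τ (a :: l) = occCount τ l + if occAt τ (a :: l) 0 then 1 else 0 := by
  rw [occCount_eq_sum hτ, occCount_eq_sum hτ, length_cons, Finset.sum_range_succ']
  rfl

lemma occCount_eq_tripleCount {τ : List ℕ} (hτ : τ.length = 3) (P : ℕ → ℕ → ℕ → Prop)
    [∀ a b c, Decidable (P a b c)] (hP : ∀ a b c, OrdIso τ [a, b, c] ↔ P a b c) (l : List ℕ) :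
    occCount τ l = tripleCount P l := by
  have hτ' : τ ≠ [] := ne_nil_of_length_pos (by omega)
  induction l with
  | nil => simp [occCount_eq_sum hτ', tripleCount]
  | cons a l ih =>
    classical
    rw [occCount_cons hτ', ih]
    rcases l with _ | ⟨b, _ | ⟨c, t⟩⟩
    · have : ¬ occAt τ [a] 0 := fun h => by simpa [hτ] using add_length_le_of_occAt hτ' h
      simp [this, tripleCount]
    · have : ¬ occAt τ [a, b] 0 := fun h => by simpa [hτ] using add_length_le_of_occAt hτ' h
      simp [this, tripleCount]
    · have : occAt τ (a :: b :: c :: t) 0 ↔ P a b c := by simp [occAt, hτ, hP]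
      rw [if_congr this rfl rfl, tripleCount, add_comm]

lemma ordIso_112_iff (a b c : ℕ) : OrdIso [1, 1, 2] [a, b, c] ↔ a = b ∧ b < c := by
  simp only [OrdIso, length_cons, length_nil, true_and]
  constructor
  · intro h
    have h01 : 1 < 1 ↔ a < b := h 0 1 (by simp) (by simp)
    have h10 : 1 < 1 ↔ b < a := h 1 0 (by simp) (by simp)
    have h12 : 1 < 2 ↔ b < c := h 1 2 (by simp) (by simp)
    omega
  · rintro ⟨rfl, h⟩ j k hj hk
    interval_cases j <;> interval_cases k <;> simp [h, h.le]

lemma ordIso_122_iff (a b c : ℕ) : OrdIso [1, 2, 2] [a, b, c] ↔ a < b ∧ b = c := by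
  simp only [OrdIso, length_cons, length_nil, true_and]
  constructor
  · intro h
    have h01 : 1 < 2 ↔ a < b := h 0 1 (by simp) (by simp)
    have h12 : 2 < 2 ↔ b < c := h 1 2 (by simp) (by simp)
    have h21 : 2 < 2 ↔ c < b := h 2 1 (by simp) (by simp)
    omega
  · rintro ⟨h, rfl⟩ j k hj hk
    interval_cases j <;> interval_cases k <;> simp [h, h.le]

end Occurrences

section Stutter

variable {α : Type*}

def StutterInvariant (P : List α → Prop) : Prop :=
  ∀ (u v : List α) (a : α), P (u ++ a :: a :: v) ↔ P (u ++ a :: v)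

lemma StutterInvariant.replicate_append {P : List α → Prop} (hP : StutterInvariant P)
    (u v : List α) (a : α) (r : ℕ) : P (u ++ (replicate (r + 1) a ++ v)) ↔ P (u ++ a :: v) := by
  induction r with
  | zero => rfl
  | succ r ih => rw [← ih, replicate_succ, cons_append, replicate_succ, cons_append, hP]

lemma StutterInvariant.runDecode_iff {P : List α → Prop} (hP : StutterInvariant P)
    {rs : List (α × ℕ)} (h : ∀ p ∈ rs, p.2 ≠ 0) : P (runDecode rs) ↔ P (rs.map Prod.fst) := by
  suffices ∀ u, P (u ++ runDecode rs) ↔ P (u ++ rs.map Prod.fst) by simpa using this []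
  induction rs with
  | nil => simp
  | cons p rs ih =>
    intro u
    obtain ⟨r, hr⟩ := Nat.exists_eq_succ_of_ne_zero (h p mem_cons_self)
    rw [runDecode_cons, hr, hP.replicate_append, map_cons, append_cons u p.1 (runDecode rs),
      append_cons u p.1 (map Prod.fst rs)]
    exact ih (fun q hq => h q (mem_cons_of_mem p hq)) _

end Stutter

section RestrictedGrowth

/-- `RGSFrom m l`: `l` can follow a prefix of a restricted growth sequence with maximum `m`. -/
def RGSFrom : ℕ → List ℕ → Prop
  | _, [] => True
  | m, a :: l => 1 ≤ a ∧ a ≤ m + 1 ∧ RGSFrom (max m a) l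

lemma rgsFrom_iff (l : List ℕ) (m : ℕ) : RGSFrom m l ↔ ∀ i < l.length,
    1 ≤ l.getD i 0 ∧ l.getD i 0 ≤ max m ((l.take i).foldr max 0) + 1 := by
  induction l generalizing m with
  | nil => simp [RGSFrom]
  | cons a l ih =>
    rw [RGSFrom, ih, length_cons, Nat.forall_lt_succ_left]
    simp [max_assoc, and_assoc]

lemma isRGS_iff_rgsFrom (l : List ℕ) : IsRGS l ↔ RGSFrom 0 l := by
  rcases l with _ | ⟨a, l⟩
  · simp [IsRGS, RGSFrom]
  · rw [RGSFrom, rgsFrom_iff]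
    have ha : a = 1 ↔ 1 ≤ a ∧ a ≤ 1 := by omega
    simp +contextual [IsRGS, forall_mem_iff_getElem, forall_and, ha, and_assoc]

lemma stutterInvariant_rgsFrom (m : ℕ) : StutterInvariant (RGSFrom m) := fun u v a => by
  induction u generalizing m with
  | nil =>
    have : a ≤ max m a + 1 := Nat.le_succ_of_le (le_max_right m a)
    simp +contextual [RGSFrom, this]
  | cons b u ih => simp [RGSFrom, ih]

lemma stutterInvariant_isRGS : StutterInvariant IsRGS := fun u v a => by
  simp only [isRGS_iff_rgsFrom, stutterInvariant_rgsFrom 0 u v a]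

end RestrictedGrowth

section Crossings

lemma crossing_iff_sublist (l : List ℕ) : Crossing l ↔ ∃ a b, a < b ∧ [a, b, a, b] <+ l := by
  constructor
  · rintro ⟨i, j, k, m, hij, hjk, hkm, hm, hik, hjm, hlt⟩
    have hi : i < l.length := by omega
    have hj : j < l.length := by omega
    have hk : k < l.length := by omega
    rw [getD_eq_getElem _ _ hi, getD_eq_getElem _ _ hj] at hlt
    rw [getD_eq_getElem _ _ hi, getD_eq_getElem _ _ hk] at hik
    rw [getD_eq_getElem _ _ hj, getD_eq_getElem _ _ hm] at hjm
    refine ⟨l[i], l[j], hlt, ?_⟩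
    have := map_getElem_sublist (l := l) (is := [⟨i, hi⟩, ⟨j, hj⟩, ⟨k, hk⟩, ⟨m, hm⟩])
      (by rw [← isChain_iff_pairwise]; simp [hij, hjk, hkm])
    simpa [hik, hjm] using this
  · rintro ⟨a, b, hab, h⟩
    obtain ⟨is, his, hlt⟩ := sublist_eq_map_getElem h
    obtain ⟨i, j, k, m, rfl⟩ := length_eq_four.1 (by simpa using (congrArg length his).symm)
    simp only [map_cons, map_nil, cons.injEq, and_true, Fin.getElem_fin] at his
    obtain ⟨hi, hj, hk, hm⟩ := his
    simp only [pairwise_cons, mem_cons, forall_eq_or_imp] at hlt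
    refine ⟨i, j, k, m, hlt.1.1, hlt.2.1.1, hlt.2.2.1.1, m.isLt, ?_, ?_, ?_⟩ <;>
      simp [← hi, ← hj, ← hk, ← hm, hab]

lemma sublist_of_sublist_stutter {p u v : List ℕ} {a : ℕ} (hp : p.IsChain (· ≠ ·))
    (h : p <+ u ++ a :: a :: v) : p <+ u ++ a :: v := by
  obtain ⟨p₁, p₂, rfl, h₁, h₂⟩ := sublist_append_iff.1 h
  refine h₁.append ?_
  have hp₂ : p₂.IsChain (· ≠ ·) := hp.infix (suffix_append p₁ p₂).isInfix
  rcases sublist_cons_iff.1 h₂ with h₂ | ⟨r, rfl, hr⟩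
  · exact h₂
  · rcases sublist_cons_iff.1 hr with hr | ⟨r', rfl, -⟩
    · exact hr.cons_cons a
    · simp at hp₂

lemma stutterInvariant_crossing : StutterInvariant Crossing := fun u v a => by
  simp only [crossing_iff_sublist]
  refine exists₂_congr fun x y => and_congr_right fun hxy => ⟨fun h => ?_, fun h => ?_⟩
  · exact sublist_of_sublist_stutter (by simp [hxy.ne, hxy.ne']) h
  · exact h.trans ((sublist_cons_self a _).cons_cons a |>.append_left u)

end Crossings

section FlipRuns

variable {α : Type*} [LinearOrder α] [Inhabited α]

def flipRuns (l : List α) : List α := runDecode (reverseChainLengths (runEncode l))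

lemma flipRuns_involutive : Function.Involutive (flipRuns (α := α)) := fun l => by
  rw [flipRuns, flipRuns, runEncode_runDecode (isRunEncoding_runEncode l).reverseChainLengths,
    reverseChainLengths_involutive, runDecode_runEncode]

lemma length_flipRuns (l : List α) : (flipRuns l).length = l.length := by
  rw [flipRuns, length_runDecode, (map_snd_reverseChainLengths_perm _).sum_eq, ← length_runDecode,
    runDecode_runEncode]

lemma StutterInvariant.flipRuns_iff {P : List α → Prop} (hP : StutterInvariant P) (l : List α) :
    P (flipRuns l) ↔ P l := by
  have h := isRunEncoding_runEncode l
  conv_rhs => rw [← runDecode_runEncode l]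
  rw [flipRuns, hP.runDecode_iff h.reverseChainLengths.1, hP.runDecode_iff h.1,
    map_fst_reverseChainLengths]

end FlipRuns

lemma ncseq_flipRuns (n : ℕ) (l : List ℕ) : NCseq n (flipRuns l) ↔ NCseq n l := by
  rw [NCseq, NCseq, length_flipRuns, stutterInvariant_isRGS.flipRuns_iff,
    stutterInvariant_crossing.flipRuns_iff]

lemma occCount_122_flipRuns (l : List ℕ) :
    occCount [1, 2, 2] (flipRuns l) = occCount [1, 1, 2] l := by
  have h := isRunEncoding_runEncode l
  rw [occCount_eq_tripleCount rfl _ ordIso_122_iff, occCount_eq_tripleCount rfl _ ordIso_112_iff,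
    flipRuns, tripleCount_runDecode_122 h.reverseChainLengths, pairCount_reverseChainLengths,
    ← tripleCount_runDecode_112 h, runDecode_runEncode]

end NCPattern

/-- The subwords 112 and 122 are equidistributed on NC_n. -/
theorem stmt18 (n k : ℕ) :
    Nat.card {l : List ℕ // NCseq n l ∧ occCount [1, 1, 2] l = k} =
      Nat.card {l : List ℕ // NCseq n l ∧ occCount [1, 2, 2] l = k} :=
  Nat.card_congr <| (NCPattern.flipRuns_involutive.toPerm _).subtypeEquiv fun l => by
    rw [Function.Involutive.coe_toPerm, NCPattern.ncseq_flipRuns, NCPattern.occCount_122_flipRuns]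
end

section
/- Let F(x,q) = Σ_{n≥0} (Σ_{π ∈ NC_n} q^{occ_{122}(π)}) x^n be the formal power series in x with coefficients polynomials in q recording the distribution of the subword 122 on non-crossing partitions. Then F satisfies the algebraic equation x(1+(q−1)x)F² = (1+(q−1)x²)F − 1. -/
/-- The generating function F(x,q) = Σ_n (Σ_{π ∈ NC_n} q^{occ_{122}(π)}) x^n,
as a formal power series in x over ℚ[q]: the coefficient of x^n is the
polynomial Σ_k #{π ∈ NC_n : occ_{122}(π) = k}·q^k. -/
noncomputable def F122 : PowerSeries (Polynomial ℚ) :=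
  PowerSeries.mk fun n =>
    ∑ k ∈ Finset.range (n + 1),
      (Nat.card {l : List ℕ // NCseq n l ∧ occCount [1, 2, 2] l = k}) •
        (Polynomial.X ^ k : Polynomial ℚ)

/-!
Cutting a non-crossing RGS `π` of length `n + 1` just before the second occurrence of the letter
`1` writes it as `π = 1 (β + 1) σ'`: here `β` is a non-crossing RGS on new blocks, and `σ'` is a
non-crossing RGS `σ` whose first block continues the block of the initial `1` and whose other
blocks are relabelled above those of `β` (non-crossingness forces this). This is a bijection
from the disjoint union of the `NC_a × NC_c` with `a + c = n` onto `NC_{n+1}`. No occurrence of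
`122` straddles the cut points, except for one extra occurrence at the front exactly when `β`
begins with `11`, and those `β` are the words `1 :: γ` with `γ ∈ NC_{a-1}` nonempty. Hence
`F = 1 + x (F + (q - 1) H) F` with `H = x (F - 1)`, and eliminating `H` gives the equation.
-/

namespace NCPartition

open List Finset.HasAntidiagonal

theorem crossing_iff_sublist {l : List ℕ} :
    Crossing l ↔ ∃ a b, a < b ∧ [a, b, a, b] <+ l := by
  constructor
  · rintro ⟨i, j, k, m, hij, hjk, hkm, hm, hik, hjm, hlt⟩
    simp only [getD_eq_getElem _ _ hm, getD_eq_getElem _ _ (by omega : i < l.length),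
      getD_eq_getElem _ _ (by omega : j < l.length),
      getD_eq_getElem _ _ (by omega : k < l.length)] at hik hjm hlt
    refine ⟨_, _, hlt, sublist_iff_exists_fin_orderEmbedding_get_eq.2
      ⟨OrderEmbedding.ofStrictMono ![⟨i, by omega⟩, ⟨j, by omega⟩, ⟨k, by omega⟩, ⟨m, hm⟩]
        ?_, ?_⟩⟩
    · refine Fin.strictMono_iff_lt_succ.2 fun t => ?_
      fin_cases t <;> simpa [Fin.lt_def]
    · intro t
      fin_cases t <;> simp [hik, hjm]
  · rintro ⟨a, b, hab, h⟩
    obtain ⟨f, hf⟩ : ∃ f : Fin 4 ↪o Fin l.length, ∀ t, [a, b, a, b].get t = l.get (f t) :=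
      sublist_iff_exists_fin_orderEmbedding_get_eq.1 h
    have hget (t : Fin 4) : l.getD (f t) 0 = [a, b, a, b].get t := by
      rw [hf t, getD_eq_getElem _ _ (f t).isLt]; rfl
    refine ⟨f 0, f 1, f 2, f 3, f.strictMono (by decide), f.strictMono (by decide),
      f.strictMono (by decide), (f 3).isLt, ?_, ?_, ?_⟩ <;>
      simp only [hget]
    exacts [rfl, rfl, hab]

theorem not_crossing_of_length_lt {l : List ℕ} (hl : l.length < 4) : ¬ Crossing l := by
  rw [crossing_iff_sublist]
  rintro ⟨_, _, _, h⟩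
  exact absurd h.length_le (by simpa using hl)

theorem Crossing.mono {l l' : List ℕ} (h : Crossing l) (hl : l <+ l') : Crossing l' := by
  rw [crossing_iff_sublist] at h ⊢
  obtain ⟨a, b, hab, h⟩ := h
  exact ⟨a, b, hab, h.trans hl⟩

theorem crossing_map_iff {f : ℕ → ℕ} (hf : StrictMono f) {l : List ℕ} :
    Crossing (l.map f) ↔ Crossing l := by
  simp only [crossing_iff_sublist, sublist_map_iff]
  constructor
  · rintro ⟨_, _, hab, l', hl', hmap⟩
    obtain ⟨a, b, c, d, rfl⟩ := length_eq_four.1 (by simpa using congrArg length hmap.symm)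
    simp only [map_cons, map_nil, cons.injEq] at hmap
    obtain ⟨rfl, rfl, hc, hd, -⟩ := hmap
    rw [← hf.injective hc, ← hf.injective hd] at hl'
    exact ⟨a, b, hf.lt_iff_lt.1 hab, hl'⟩
  · rintro ⟨a, b, hab, hl⟩
    exact ⟨f a, f b, hf hab, _, hl, rfl⟩

theorem crossing_cons_cons_iff {a : ℕ} {l : List ℕ} :
    Crossing (a :: a :: l) ↔ Crossing (a :: l) := by
  refine ⟨fun h => ?_, fun h => Crossing.mono h (sublist_cons_self _ _)⟩
  rw [crossing_iff_sublist] at h ⊢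
  obtain ⟨x, y, hxy, h⟩ := h
  refine ⟨x, y, hxy, ?_⟩
  rcases sublist_cons_iff.1 h with h | ⟨r, hr, h⟩
  · exact h
  · obtain ⟨rfl, rfl⟩ := cons.inj hr
    rcases sublist_cons_iff.1 h with h | ⟨r', hr', -⟩
    · exact h.cons_cons _
    · exact absurd (cons.inj hr').1 hxy.ne'

theorem crossing_append_append {x B S : List ℕ} (hB : ∀ y ∈ B, y ∉ x ++ S)
    (h : Crossing (x ++ B ++ S)) : Crossing B ∨ Crossing (x ++ S) := by
  simp only [crossing_iff_sublist, sublist_append_iff] at h ⊢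
  obtain ⟨a, b, hab, _, w₃, hw, ⟨w₁, w₂, rfl, h₁, h₂⟩, h₃⟩ := h
  -- each letter of `abab` recurs two places away, so a proper factor shares a letter with the rest
  have key : w₂ = [] ∨ (w₁ = [] ∧ w₃ = []) ∨ ∃ y ∈ w₂, y ∈ w₁ ++ w₃ := by
    replace hw := hw.symm
    rcases w₁ with _ | ⟨_, _ | ⟨_, _ | ⟨_, _ | ⟨_, _ | ⟨_, _⟩⟩⟩⟩⟩ <;>
      rcases w₂ with _ | ⟨_, _ | ⟨_, _ | ⟨_, _ | ⟨_, _ | ⟨_, _⟩⟩⟩⟩⟩ <;>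
      simp_all
  rcases key with rfl | ⟨rfl, rfl⟩ | ⟨y, hy₂, hy⟩
  · exact Or.inr ⟨a, b, hab, _, _, by simpa using hw, h₁, h₃⟩
  · exact Or.inl ⟨a, b, hab, by simpa [hw] using h₂⟩
  · exact absurd ((h₁.append h₃).subset hy) (hB y (h₂.subset hy₂))

theorem crossing_one_cons_iff {σ : List ℕ} (hσ : ∀ a ∈ σ.head?, a = 1) :
    Crossing (1 :: σ) ↔ Crossing σ := by
  rcases σ with _ | ⟨a, σ⟩
  · exact iff_of_false (not_crossing_of_length_lt (by simp))
      (not_crossing_of_length_lt (by simp))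
  · obtain rfl : a = 1 := hσ a rfl
    exact crossing_cons_cons_iff

/-- `IsRGSFrom m l`: `l` can follow a prefix of a restricted growth sequence whose largest
letter is `m`. -/
def IsRGSFrom : ℕ → List ℕ → Prop
  | _, [] => True
  | m, x :: l => 1 ≤ x ∧ x ≤ m + 1 ∧ IsRGSFrom (max m x) l

@[simp] theorem isRGSFrom_nil {m : ℕ} : IsRGSFrom m [] := trivial

@[simp] theorem isRGSFrom_cons {m x : ℕ} {l : List ℕ} :
    IsRGSFrom m (x :: l) ↔ 1 ≤ x ∧ x ≤ m + 1 ∧ IsRGSFrom (max m x) l := Iff.rfl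

theorem isRGSFrom_iff {m : ℕ} {l : List ℕ} : IsRGSFrom m l ↔ (∀ x ∈ l, 1 ≤ x) ∧
    ∀ i (hi : i < l.length), l[i] ≤ max m ((l.take i).foldr max 0) + 1 := by
  induction l generalizing m with
  | nil => simp
  | cons x l ih =>
    simp only [isRGSFrom_cons, ih, forall_mem_cons, length_cons, Nat.forall_lt_succ_left',
      getElem_cons_zero, take_zero, foldr_nil, getElem_cons_succ, take_succ_cons, foldr_cons,
      max_assoc, Nat.max_zero]
    tauto

theorem isRGS_iff_isRGSFrom {l : List ℕ} : IsRGS l ↔ IsRGSFrom 0 l := by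
  rw [isRGSFrom_iff, IsRGS]
  rcases l with _ | ⟨x, l⟩
  · simp
  simp only [getD_cons_zero, length_cons, Nat.forall_lt_succ_left', getElem_cons_zero,
    take_zero, foldr_nil, zero_max, getD_cons_succ, forall_mem_cons]
  constructor
  · rintro ⟨rfl, ⟨-, hl⟩, hlt⟩
    refine ⟨⟨le_rfl, hl⟩, le_rfl, fun i hi => ?_⟩
    have := hlt i (by omega)
    rwa [getD_eq_getElem _ _ hi] at this
  · rintro ⟨⟨hx, hl⟩, hx', hlt⟩
    refine ⟨by omega, ⟨hx, hl⟩, fun i hi => ?_⟩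
    rw [getD_eq_getElem _ _ (by omega)]
    exact hlt i (by omega)

theorem IsRGS.head?_eq_one {l : List ℕ} (h : IsRGS l) : ∀ a ∈ l.head?, a = 1 := by
  rcases l with _ | ⟨a, l⟩
  · simp
  · simpa using h.1

theorem isRGSFrom_append {m : ℕ} {u v : List ℕ} :
    IsRGSFrom m (u ++ v) ↔ IsRGSFrom m u ∧ IsRGSFrom (max m (u.foldr max 0)) v := by
  induction u generalizing m with
  | nil => simp
  | cons x u ih => simp [ih, max_assoc, and_assoc]

theorem isRGSFrom_one_iff {σ : List ℕ} (hσ : ∀ a ∈ σ.head?, a = 1) :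
    IsRGSFrom 1 σ ↔ IsRGSFrom 0 σ := by
  rcases σ with _ | ⟨a, σ⟩
  · simp
  · obtain rfl : a = 1 := hσ a rfl
    simp

theorem isRGSFrom_map_succ {m : ℕ} {β : List ℕ} (hβ : ∀ x ∈ β, 1 ≤ x) :
    IsRGSFrom (m + 1) (β.map (· + 1)) ↔ IsRGSFrom m β := by
  induction β generalizing m with
  | nil => simp
  | cons x β ih =>
    rw [forall_mem_cons] at hβ
    simp [← ih hβ.2, hβ.1, Nat.succ_max_succ]

theorem max_one_foldr_max_map_succ (β : List ℕ) :
    max 1 ((β.map (· + 1)).foldr max 0) = β.foldr max 0 + 1 := by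
  induction β with
  | nil => rfl
  | cons x β ih => simp only [map_cons, foldr_cons, max_left_comm 1, ih, Nat.succ_max_succ]

/-- Shifts the labels of all blocks but the first by `m`; `0` is fixed as well, so that the map
is strictly monotone. -/
def shiftLabels (m x : ℕ) : ℕ := if x ≤ 1 then x else x + m

theorem strictMono_shiftLabels (m : ℕ) : StrictMono (shiftLabels m) := by
  intro x y h
  unfold shiftLabels
  split_ifs <;> omega

theorem isRGSFrom_map_shiftLabels {s m : ℕ} {σ : List ℕ} (hs : 1 ≤ s) :
    IsRGSFrom (s + m) (σ.map (shiftLabels m)) ↔ IsRGSFrom s σ := by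
  induction σ generalizing s with
  | nil => simp
  | cons x σ ih =>
    have h₁ : 1 ≤ shiftLabels m x ↔ 1 ≤ x := by simp only [shiftLabels]; split_ifs <;> omega
    have h₂ : shiftLabels m x ≤ s + m + 1 ↔ x ≤ s + 1 := by
      simp only [shiftLabels]; split_ifs <;> omega
    have hmax (hx : 1 ≤ x) : max (s + m) (shiftLabels m x) = max s x + m := by
      simp only [shiftLabels]; split_ifs <;> omega
    simp only [map_cons, isRGSFrom_cons, h₁, h₂]
    refine and_congr_right fun hx => and_congr_right fun _ => ?_
    rw [hmax hx, ih (le_max_of_le_left hs)]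

theorem IsRGSFrom.mem_of_lt {m y : ℕ} {l : List ℕ} (h : IsRGSFrom m l) (hmy : m < y)
    (hy : y ≤ l.foldr max 0) : y ∈ l := by
  induction l generalizing m with
  | nil => rw [foldr_nil] at hy; omega
  | cons x l ih =>
    obtain ⟨-, hx, h⟩ := h
    rw [foldr_cons] at hy
    rcases Nat.lt_or_ge (max m x) y with hlt | hle
    · exact mem_cons_of_mem _ (ih h hlt (by omega))
    · exact mem_cons.2 (Or.inl (by omega))

theorem IsRGSFrom.le_add_length {m : ℕ} {l : List ℕ} (h : IsRGSFrom m l) :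
    ∀ x ∈ l, x ≤ m + l.length := by
  induction l generalizing m with
  | nil => simp
  | cons x l ih =>
    obtain ⟨-, hx, h⟩ := h
    simp only [forall_mem_cons, length_cons]
    exact ⟨by omega, fun y hy => (ih h y hy).trans (by omega)⟩

def starts122 : List ℕ → Bool
  | a :: b :: c :: _ => decide (a < b ∧ b = c)
  | _ => false

def occ122 (l : List ℕ) : ℕ := l.tails.countP starts122

@[simp] theorem occ122_nil : occ122 [] = 0 := rfl

theorem occ122_cons (a : ℕ) (l : List ℕ) :
    occ122 (a :: l) = occ122 l + if starts122 (a :: l) then 1 else 0 := by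
  simp only [occ122, tails_cons, countP_cons]

theorem occ122_le_length (l : List ℕ) : occ122 l ≤ l.length := by
  induction l with
  | nil => rfl
  | cons a l ih =>
    rw [occ122_cons]
    match l with
    | [] | [_] => simp [starts122, occ122]
    | _ :: _ :: _ => simp only [length_cons] at ih ⊢; split_ifs <;> omega

theorem occAt_122_iff {l : List ℕ} {i : ℕ} : occAt [1, 2, 2] l i ↔ starts122 (l.drop i) := by
  unfold occAt OrdIso
  match l.drop i with
  | [] | [_] | [_, _] => simp [starts122]
  | a :: b :: c :: t =>
    simp only [length_cons, length_nil, take_succ_cons, take_zero, starts122, decide_eq_true_eq]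
    constructor
    · rintro ⟨-, h⟩
      have h₁ := (h 0 1 (by omega) (by omega)).1 (by decide)
      have h₂ := h 1 2 (by omega) (by omega)
      have h₃ := h 2 1 (by omega) (by omega)
      simp only [getD_cons_zero, getD_cons_succ, lt_self_iff_false, false_iff, not_lt] at h₁ h₂ h₃
      exact ⟨h₁, by omega⟩
    · rintro ⟨hab, rfl⟩
      refine ⟨trivial, fun j k hj hk => ?_⟩
      interval_cases j <;> interval_cases k <;> simp [hab, hab.le]

theorem card_filter_range_starts122 (l : List ℕ) :
    ((Finset.range (l.length + 1)).filter fun i => starts122 (l.drop i)).card = occ122 l := by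
  induction l with
  | nil => simp [starts122]
  | cons a l ih =>
    rw [Finset.card_filter, length_cons, Finset.sum_range_succ', occ122_cons, ← ih,
      Finset.card_filter]
    rfl

theorem occCount_eq_occ122 (l : List ℕ) : occCount [1, 2, 2] l = occ122 l := by
  rw [occCount, ← card_filter_range_starts122, ← Nat.card_eq_finsetCard]
  refine Nat.card_congr (Equiv.subtypeEquivRight fun i => ?_)
  rw [occAt_122_iff, Finset.mem_filter, Finset.mem_range, iff_and_self]
  intro h
  by_contra hi
  rw [drop_eq_nil_of_le (by omega)] at h
  exact Bool.false_ne_true h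

theorem occ122_map {f : ℕ → ℕ} (hf : StrictMono f) (l : List ℕ) :
    occ122 (l.map f) = occ122 l := by
  induction l with
  | nil => rfl
  | cons a l ih =>
    rw [map_cons, occ122_cons, occ122_cons, ih]
    match l with
    | [] | [_] => rfl
    | b :: c :: _ => simp [starts122, hf.lt_iff_lt, hf.injective.eq_iff]

theorem occ122_append_one_cons {s : List ℕ} (hs : ∀ x ∈ s, 1 ≤ x) (t : List ℕ) :
    occ122 (s ++ 1 :: t) = occ122 s + occ122 (1 :: t) := by
  induction s with
  | nil => simp
  | cons a s ih =>
    rw [forall_mem_cons] at hs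
    rw [cons_append, occ122_cons, occ122_cons, ih hs.2, add_right_comm]
    have ha : ¬ a < 1 := by omega
    congr 2
    match s, hs with
    | [], _ => cases t <;> simp [starts122, ha]
    | [b], _ => simp only [starts122]; grind
    | b :: c :: _, _ => rfl

theorem occ122_one_cons_one_cons (l : List ℕ) : occ122 (1 :: 1 :: l) = occ122 (1 :: l) := by
  rw [occ122_cons]
  match l with
  | [] | _ :: _ => simp [starts122]

theorem occ122_one_cons_map_succ {β : List ℕ} (hβ : ∀ a ∈ β.head?, a = 1) :
    occ122 (1 :: β.map (· + 1)) = occ122 β + if [1, 1] <+: β then 1 else 0 := by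
  rw [occ122_cons, occ122_map add_left_strictMono]
  congr 2
  match β, hβ with
  | [], _ | [_], _ => simp [starts122]
  | b :: c :: _, hβ =>
    obtain rfl : b = 1 := hβ b rfl
    simp [starts122, eq_comm]

/-- The first-return decomposition read backwards: the letter `1`, then `β` on new blocks,
then `σ` with its first block joined to that of the initial `1`. -/
def ncCons (β σ : List ℕ) : List ℕ :=
  1 :: (β.map (· + 1) ++ σ.map (shiftLabels (β.foldr max 0)))

@[simp] theorem length_ncCons (β σ : List ℕ) :
    (ncCons β σ).length = β.length + σ.length + 1 := by
  simp [ncCons]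

theorem isRGS_ncCons_iff {β σ : List ℕ} (hβ : ∀ x ∈ β, 1 ≤ x) (hσ : ∀ a ∈ σ.head?, a = 1) :
    IsRGS (ncCons β σ) ↔ IsRGS β ∧ IsRGS σ := by
  simp only [isRGS_iff_isRGSFrom, ncCons, isRGSFrom_cons, isRGSFrom_append, le_refl,
    zero_add, max_one_foldr_max_map_succ, true_and, Nat.zero_max]
  rw [isRGSFrom_map_succ hβ, add_comm, isRGSFrom_map_shiftLabels le_rfl, isRGSFrom_one_iff hσ]

theorem crossing_ncCons_iff {β σ : List ℕ} (hβ : ∀ x ∈ β, 1 ≤ x) (hσ : ∀ a ∈ σ.head?, a = 1) :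
    Crossing (ncCons β σ) ↔ Crossing β ∨ Crossing σ := by
  set M := β.foldr max 0
  have hS : 1 :: σ.map (shiftLabels M) = (1 :: σ).map (shiftLabels M) := rfl
  constructor
  · intro h
    have hdisj : ∀ y ∈ β.map (· + 1), y ∉ [1] ++ σ.map (shiftLabels M) := by
      simp only [mem_map, singleton_append, mem_cons, not_or, forall_exists_index, and_imp]
      rintro _ b hb rfl
      have hbM : b ≤ M := le_max_of_le hb le_rfl
      have hb1 := hβ b hb
      refine ⟨by omega, fun ⟨c, _, hc⟩ => ?_⟩
      unfold shiftLabels at hc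
      split_ifs at hc <;> omega
    rcases crossing_append_append hdisj h with h | h
    · exact Or.inl ((crossing_map_iff add_left_strictMono).1 h)
    · rw [singleton_append, hS, crossing_map_iff (strictMono_shiftLabels M),
        crossing_one_cons_iff hσ] at h
      exact Or.inr h
  · rintro (h | h)
    · exact Crossing.mono ((crossing_map_iff add_left_strictMono).2 h)
        ((sublist_append_left _ _).cons 1)
    · rw [← crossing_one_cons_iff hσ, ← crossing_map_iff (strictMono_shiftLabels M), ← hS] at h
      exact Crossing.mono h ((sublist_append_right _ _).cons_cons 1)

theorem occ122_ncCons {β σ : List ℕ} (hβ : IsRGS β) (hσ : IsRGS σ) :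
    occ122 (ncCons β σ) = occ122 β + occ122 σ + if [1, 1] <+: β then 1 else 0 := by
  rcases σ with _ | ⟨a, σ⟩
  · rw [ncCons, map_nil, append_nil, occ122_one_cons_map_succ (IsRGS.head?_eq_one hβ),
      occ122_nil, add_zero]
  · obtain rfl : a = 1 := IsRGS.head?_eq_one hσ a rfl
    have hS : (1 :: σ).map (shiftLabels (β.foldr max 0)) =
        1 :: σ.map (shiftLabels (β.foldr max 0)) := rfl
    have hpos : ∀ x ∈ 1 :: β.map (· + 1), 1 ≤ x := by simp
    rw [ncCons, ← cons_append, hS, occ122_append_one_cons hpos, ← hS,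
      occ122_map (strictMono_shiftLabels _), occ122_one_cons_map_succ (IsRGS.head?_eq_one hβ)]
    omega

theorem takeWhile_ne_one_map_succ_append {β σ : List ℕ} (hβ : ∀ x ∈ β, 1 ≤ x)
    (hσ : ∀ a ∈ σ.head?, a = 1) (m : ℕ) :
    (β.map (· + 1) ++ σ.map (shiftLabels m)).takeWhile (· != 1) = β.map (· + 1) := by
  rw [takeWhile_append_of_pos (by simpa using fun x hx => Nat.ne_of_gt (hβ x hx))]
  rcases σ with _ | ⟨a, σ⟩
  · simp
  · obtain rfl : a = 1 := hσ a rfl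
    simp [shiftLabels]

theorem ncCons_inj {β σ β' σ' : List ℕ} (hβ : ∀ x ∈ β, 1 ≤ x) (hσ : ∀ a ∈ σ.head?, a = 1)
    (hβ' : ∀ x ∈ β', 1 ≤ x) (hσ' : ∀ a ∈ σ'.head?, a = 1) :
    ncCons β σ = ncCons β' σ' ↔ β = β' ∧ σ = σ' := by
  refine ⟨fun h => ?_, fun ⟨rfl, rfl⟩ => rfl⟩
  have htail := (cons.inj h).2
  have hB := congrArg (takeWhile (· != 1)) htail
  rw [takeWhile_ne_one_map_succ_append hβ hσ, takeWhile_ne_one_map_succ_append hβ' hσ'] at hB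
  obtain rfl : β = β' := map_injective_iff.2 (add_left_injective 1) hB
  rw [append_cancel_left_eq] at htail
  exact ⟨rfl, map_injective_iff.2 (strictMono_shiftLabels _).injective htail⟩

/-- A letter `x` of `v` with `1 < x ≤ max u` also occurs in `u`, giving the crossing `1 x 1 x`. -/
theorem le_one_or_foldr_max_lt_of_not_crossing {u v : List ℕ} (hu : IsRGSFrom 1 u)
    (hv : ∀ a ∈ v.head?, a = 1) (hc : ¬ Crossing (1 :: (u ++ v))) :
    ∀ x ∈ v, x ≤ 1 ∨ u.foldr max 0 < x := by
  intro x hx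
  by_contra! hx'
  obtain ⟨v', rfl⟩ : ∃ v', v = 1 :: v' := by
    rcases v with _ | ⟨a, v'⟩
    · simp at hx
    · exact ⟨v', by rw [hv a rfl]⟩
  rw [mem_cons] at hx
  refine hc (crossing_iff_sublist.2 ⟨1, x, hx'.1, ?_⟩)
  exact ((singleton_sublist.2 (hu.mem_of_lt hx'.1 hx'.2)).append
    ((singleton_sublist.2 (hx.resolve_left (by omega))).cons_cons 1)).cons_cons 1

theorem exists_map_succ_eq {u : List ℕ} (hu : ∀ x ∈ u, 2 ≤ x) :
    ∃ β : List ℕ, (∀ x ∈ β, 1 ≤ x) ∧ β.map (· + 1) = u := by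
  refine ⟨u.map (· - 1), ?_, ?_⟩
  · simp only [mem_map, forall_exists_index, and_imp, forall_apply_eq_imp_iff₂]
    exact fun x hx => by have := hu x hx; omega
  · rw [map_map]
    exact map_congr_left (fun x hx => Nat.sub_add_cancel (by have := hu x hx; omega))
      |>.trans (map_id _)

theorem exists_map_shiftLabels_eq {m : ℕ} {v : List ℕ} (hv : ∀ x ∈ v, x ≤ 1 ∨ m + 2 ≤ x)
    (hv₁ : ∀ a ∈ v.head?, a = 1) :
    ∃ σ : List ℕ, (∀ a ∈ σ.head?, a = 1) ∧ σ.map (shiftLabels m) = v := by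
  refine ⟨v.map fun x => if x ≤ 1 then x else x - m, ?_, ?_⟩
  · simp only [head?_map, Option.mem_def, Option.map_eq_some_iff, forall_exists_index, and_imp]
    rintro _ a ha rfl
    simp [hv₁ a ha]
  · rw [map_map]
    refine map_congr_left (fun x hx => ?_) |>.trans (map_id _)
    simp only [Function.comp_apply, shiftLabels, id]
    rcases hv x hx with h | h <;> split_ifs <;> omega

theorem exists_eq_ncCons {l : List ℕ} (hl : IsRGS l) (hlc : ¬ Crossing l) (hne : l ≠ []) :
    ∃ β σ, IsRGS β ∧ ¬ Crossing β ∧ IsRGS σ ∧ ¬ Crossing σ ∧ l = ncCons β σ := by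
  obtain ⟨t, rfl⟩ : ∃ t, l = 1 :: t := by
    rcases l with _ | ⟨a, t⟩
    · exact absurd rfl hne
    · exact ⟨t, by rw [IsRGS.head?_eq_one hl a rfl]⟩
  have huv : t.takeWhile (· != 1) ++ t.dropWhile (· != 1) = t := takeWhile_append_dropWhile
  obtain ⟨β, hβ, hβu⟩ : ∃ β : List ℕ, (∀ x ∈ β, 1 ≤ x) ∧ β.map (· + 1) = t.takeWhile (· != 1) :=
    exists_map_succ_eq fun x hx => by
      have h₁ := hl.2.1 x (mem_cons_of_mem _ (takeWhile_subset _ hx))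
      have h₂ : x ≠ 1 := by simpa using mem_takeWhile_imp hx
      omega
  have hv : ∀ a ∈ (t.dropWhile (· != 1)).head?, a = 1 := fun a ha => by
    have := head?_dropWhile_not (· != 1) t
    rw [ha] at this
    simpa using this
  rw [← huv, ← hβu] at hl hlc
  have hvM : ∀ x ∈ t.dropWhile (· != 1), x ≤ 1 ∨ β.foldr max 0 + 2 ≤ x := by
    have hMu := max_one_foldr_max_map_succ β
    have hut := (isRGSFrom_append.1 (by simpa [isRGS_iff_isRGSFrom] using hl)).1
    intro x hx
    rcases le_one_or_foldr_max_lt_of_not_crossing hut hv hlc x hx with h | h <;> omega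
  obtain ⟨σ, hσ, hσv⟩ := exists_map_shiftLabels_eq hvM hv
  rw [← hσv, ← ncCons, isRGS_ncCons_iff hβ hσ] at hl
  rw [← hσv, ← ncCons, crossing_ncCons_iff hβ hσ, not_or] at hlc
  exact ⟨β, σ, hl.1, hlc.1, hl.2, hlc.2, by rw [ncCons, hβu, hσv, huv]⟩

theorem ncSeq_ncCons {a c : ℕ} {β σ : List ℕ} (hβ : NCseq a β) (hσ : NCseq c σ) :
    NCseq (a + c + 1) (ncCons β σ) := by
  obtain ⟨rfl, hβR, hβC⟩ := hβ
  obtain ⟨rfl, hσR, hσC⟩ := hσ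
  have hσ1 := IsRGS.head?_eq_one hσR
  refine ⟨length_ncCons β σ, (isRGS_ncCons_iff hβR.2.1 hσ1).2 ⟨hβR, hσR⟩, ?_⟩
  rw [crossing_ncCons_iff hβR.2.1 hσ1]
  exact not_or.2 ⟨hβC, hσC⟩

theorem ncSeq_one_cons_iff {n : ℕ} {γ : List ℕ} (hγ : ∀ a ∈ γ.head?, a = 1) :
    NCseq (n + 1) (1 :: γ) ↔ NCseq n γ := by
  simp only [NCseq, length_cons, Nat.add_right_cancel_iff, isRGS_iff_isRGSFrom, isRGSFrom_cons,
    le_refl, zero_add, Nat.zero_max, true_and, isRGSFrom_one_iff hγ, crossing_one_cons_iff hγ]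

theorem finite_setOf_ncSeq (n : ℕ) : {l | NCseq n l}.Finite := by
  refine (Set.finite_range fun f : Fin n → Fin (n + 1) => List.ofFn fun i => (f i : ℕ)).subset ?_
  rintro l ⟨rfl, hl, -⟩
  have hle := IsRGSFrom.le_add_length (isRGS_iff_isRGSFrom.1 hl)
  exact ⟨fun i => ⟨l[i], Nat.lt_succ_of_le ((hle _ (getElem_mem _)).trans_eq (zero_add _))⟩,
    ofFn_getElem⟩

noncomputable def ncFinset (n : ℕ) : Finset (List ℕ) := (finite_setOf_ncSeq n).toFinset

@[simp] theorem mem_ncFinset {n : ℕ} {l : List ℕ} : l ∈ ncFinset n ↔ NCseq n l :=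
  Set.Finite.mem_toFinset _

theorem ncFinset_zero : ncFinset 0 = {[]} := by
  ext l
  simp only [mem_ncFinset, Finset.mem_singleton]
  refine ⟨fun h => length_eq_zero_iff.1 h.1, ?_⟩
  rintro rfl
  exact ⟨rfl, by simp [isRGS_iff_isRGSFrom], not_crossing_of_length_lt (by simp)⟩

theorem sum_ncFinset_succ {M : Type*} [AddCommMonoid M] (n : ℕ) (w : List ℕ → M) :
    ∑ l ∈ ncFinset (n + 1), w l =
      ∑ x ∈ (antidiagonal n).sigma (fun p => ncFinset p.1 ×ˢ ncFinset p.2),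
        w (ncCons x.2.1 x.2.2) := by
  symm
  refine Finset.sum_nbij (fun x => ncCons x.2.1 x.2.2) ?_ ?_ ?_ fun _ _ => rfl
  · rintro ⟨⟨a, c⟩, β, σ⟩ hx
    simp only [Finset.mem_sigma, mem_antidiagonal, Finset.mem_product, mem_ncFinset] at hx
    obtain ⟨rfl, hβ, hσ⟩ := hx
    exact mem_ncFinset.2 (ncSeq_ncCons hβ hσ)
  · rintro ⟨⟨a, c⟩, β, σ⟩ hx ⟨⟨a', c'⟩, β', σ'⟩ hx' h
    simp only [Finset.coe_sigma, Set.mem_sigma_iff, Finset.mem_coe, mem_antidiagonal,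
      Finset.mem_product, mem_ncFinset] at hx hx'
    obtain ⟨-, ⟨rfl, hβR, -⟩, rfl, hσR, -⟩ := hx
    obtain ⟨-, ⟨rfl, hβR', -⟩, rfl, hσR', -⟩ := hx'
    obtain ⟨rfl, rfl⟩ := (ncCons_inj hβR.2.1 (IsRGS.head?_eq_one hσR)
      hβR'.2.1 (IsRGS.head?_eq_one hσR')).1 h
    rfl
  · intro l hl
    obtain ⟨hlen, hlR, hlC⟩ := mem_ncFinset.1 hl
    obtain ⟨β, σ, hβR, hβC, hσR, hσC, rfl⟩ :=
      exists_eq_ncCons hlR hlC (ne_nil_of_length_eq_add_one hlen)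
    refine ⟨⟨(β.length, σ.length), β, σ⟩, ?_, rfl⟩
    simp only [Finset.coe_sigma, Set.mem_sigma_iff, Finset.mem_coe, mem_antidiagonal,
      Finset.mem_product, mem_ncFinset]
    exact ⟨by simpa using hlen, ⟨rfl, hβR, hβC⟩, rfl, hσR, hσC⟩

theorem sum_ncFinset_succ_filter_prefix {M : Type*} [AddCommMonoid M] (n : ℕ)
    (w : List ℕ → M) :
    ∑ l ∈ (ncFinset (n + 1)).filter ([1, 1] <+: ·), w l =
      ∑ γ ∈ (ncFinset n).filter (· ≠ []), w (1 :: γ) := by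
  symm
  refine Finset.sum_nbij (1 :: ·) ?_ (fun _ _ _ _ h => cons_injective h) ?_ fun _ _ => rfl
  · intro γ hγ
    simp only [Finset.mem_filter, mem_ncFinset] at hγ ⊢
    obtain ⟨hγn, hne⟩ := hγ
    obtain ⟨a, γ, rfl⟩ := exists_cons_of_ne_nil hne
    obtain rfl : a = 1 := IsRGS.head?_eq_one hγn.2.1 a rfl
    exact ⟨(ncSeq_one_cons_iff (by simp)).2 hγn, by simp⟩
  · intro l hl
    simp only [Finset.coe_filter, Set.mem_ofPred_eq, mem_ncFinset] at hl
    obtain ⟨hln, t, rfl⟩ := hl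
    refine ⟨1 :: t, ?_, rfl⟩
    simp only [Finset.coe_filter, Set.mem_ofPred_eq, mem_ncFinset, ne_eq, reduceCtorEq,
      not_false_eq_true, and_true]
    exact (ncSeq_one_cons_iff (by simp)).1 hln

section GeneratingFunction

open PowerSeries

variable {R : Type*} [CommRing R] (q : R)

noncomputable def ncGF : PowerSeries R :=
  mk fun n => ∑ l ∈ ncFinset n, q ^ occ122 l

noncomputable def ncGFPrefixOneOne : PowerSeries R :=
  mk fun n => ∑ l ∈ (ncFinset n).filter ([1, 1] <+: ·), q ^ occ122 l

theorem ncGFPrefixOneOne_eq : ncGFPrefixOneOne q = X * (ncGF q - 1) := by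
  ext (_ | n)
  · simp [ncGFPrefixOneOne, ncFinset_zero, Finset.filter_singleton]
  rw [ncGFPrefixOneOne, coeff_mk, coeff_succ_X_mul, map_sub, ncGF, coeff_mk,
    sum_ncFinset_succ_filter_prefix, Finset.filter_ne']
  have hocc : ∀ γ ∈ (ncFinset n).erase [], occ122 (1 :: γ) = occ122 γ := by
    intro γ hγ
    obtain ⟨hne, hγ⟩ := Finset.mem_erase.1 hγ
    obtain ⟨a, γ, rfl⟩ := exists_cons_of_ne_nil hne
    obtain rfl : a = 1 := IsRGS.head?_eq_one (mem_ncFinset.1 hγ).2.1 a rfl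
    exact occ122_one_cons_one_cons γ
  rw [Finset.sum_congr rfl fun γ hγ => by rw [hocc γ hγ]]
  rcases n with _ | n
  · simp [ncFinset_zero]
  · rw [Finset.erase_eq_of_notMem (by simp [NCseq]), coeff_one, if_neg n.succ_ne_zero, sub_zero]

theorem coeff_succ_ncGF (n : ℕ) :
    coeff (n + 1) (ncGF q) = ∑ p ∈ antidiagonal n,
      (coeff p.1 (ncGF q) + (q - 1) * coeff p.1 (ncGFPrefixOneOne q)) * coeff p.2 (ncGF q) := by
  simp only [ncGF, ncGFPrefixOneOne, coeff_mk]
  rw [sum_ncFinset_succ, Finset.sum_sigma]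
  refine Finset.sum_congr rfl fun p _ => ?_
  rw [Finset.sum_product, Finset.sum_filter, Finset.mul_sum _ _ (q - 1),
    ← Finset.sum_add_distrib, Finset.sum_mul]
  refine Finset.sum_congr rfl fun β hβ => ?_
  rw [Finset.mul_sum]
  refine Finset.sum_congr rfl fun σ hσ => ?_
  rw [occ122_ncCons (mem_ncFinset.1 hβ).2.1 (mem_ncFinset.1 hσ).2.1]
  split_ifs <;> ring

theorem ncGF_eq : ncGF q = 1 + X * ((ncGF q + C (q - 1) * ncGFPrefixOneOne q) * ncGF q) := by
  ext (_ | n)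
  · simp [ncGF, ncFinset_zero]
  · rw [coeff_succ_ncGF, map_add, coeff_one, if_neg n.succ_ne_zero, zero_add, coeff_succ_X_mul,
      coeff_mul]
    simp only [map_add, coeff_C_mul]

theorem ncGF_equation :
    X * (1 + (C q - 1) * X) * ncGF q ^ 2 = (1 + (C q - 1) * X ^ 2) * ncGF q - 1 := by
  have hG := ncGF_eq q
  rw [ncGFPrefixOneOne_eq, map_sub, map_one] at hG
  linear_combination -hG

end GeneratingFunction

theorem F122_eq_ncGF : F122 = ncGF (Polynomial.X : Polynomial ℚ) := by
  refine PowerSeries.ext fun n => ?_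
  rw [F122, ncGF, PowerSeries.coeff_mk, PowerSeries.coeff_mk]
  have hcard (k : ℕ) : Nat.card {l : List ℕ // NCseq n l ∧ occCount [1, 2, 2] l = k} =
      ((ncFinset n).filter (occ122 · = k)).card := by
    rw [← Nat.card_eq_finsetCard]
    exact Nat.card_congr (Equiv.subtypeEquivRight fun l => by simp [occCount_eq_occ122])
  have hocc : ∀ l ∈ ncFinset n, occ122 l ∈ Finset.range (n + 1) := fun l hl =>
    Finset.mem_range_succ_iff.2 ((occ122_le_length l).trans_eq (mem_ncFinset.1 hl).1)
  simp_rw [hcard]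
  rw [← Finset.sum_fiberwise_of_maps_to hocc (fun l => (Polynomial.X : Polynomial ℚ) ^ occ122 l)]
  refine Finset.sum_congr rfl fun k _ =>
    (Finset.sum_const _).symm.trans (Finset.sum_congr rfl fun l hl => ?_)
  rw [(Finset.mem_filter.1 hl).2]

end NCPartition

/-- F satisfies x(1+(q−1)x)F² = (1+(q−1)x²)F − 1 as formal power series. -/
theorem stmt19 :
    letI X : PowerSeries (Polynomial ℚ) := PowerSeries.X
    letI q : PowerSeries (Polynomial ℚ) := PowerSeries.C Polynomial.X
    X * (1 + (q - 1) * X) * F122 ^ 2 = (1 + (q - 1) * X ^ 2) * F122 - 1 := by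
  rw [NCPartition.F122_eq_ncGF]
  exact NCPartition.ncGF_equation Polynomial.X
end
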